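/- Let A be a commutative ring which is a ℂ-algebra and let x, z ∈ A satisfy x·z = 0. Fix β, t ∈ ℂ. Then for every integer N ≥ 1 the normalized Branson–Gover elements satisfy the recurrence L̄_N = ((β/2+N)(β/2−N+1)·x + (β/2+N−1)(β/2−N)·z + (β/2−N)(β/2−N+1)(β/2+N−1)(β/2+N)·t) · L̄_{N−1}, where L̄_0 = 1 (since P_0 = 1 and Q_0 = 0). -/
import Mathlib


open Finset

/-- Ascending Pochhammer symbol `(a)_k = ∏_{i=0}^{k-1} (a+i)`. -/
noncomputable def poch (a : ℂ) (k : ℕ) : ℂ := ∏ i ∈ Finset.range k, (a + i)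

/-- `P_N = ∏_{l=1}^N (x + (β/2+l-1)(β/2-l)·t)`, modelling `(2J/n)^N R_N(y^(+);0)`. -/
noncomputable def Ppoly {A : Type*} [CommRing A] [Algebra ℂ A] (x : A) (β t : ℂ) (N : ℕ) : A :=
  ∏ l ∈ Finset.Icc 1 N, (x + ((β/2 + (l:ℂ) - 1) * (β/2 - (l:ℂ)) * t) • (1 : A))

/-- `Q_N = ∑_{j=1}^N (β/2-N+j+1)_{2(N-j)} t^{N-j} z ∏_{l=1}^{j-1} (z + (β/2+N-l+1)(β/2-N+l)·t)`,
modelling `(2J/n)^N R^(1)_N(y^(1))`. -/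
noncomputable def Qpoly {A : Type*} [CommRing A] [Algebra ℂ A] (z : A) (β t : ℂ) (N : ℕ) : A :=
  ∑ j ∈ Finset.Icc 1 N,
    (poch (β/2 - (N:ℂ) + (j:ℂ) + 1) (2*(N-j)) * t^(N-j)) •
      (z * ∏ l ∈ Finset.Icc 1 (j-1), (z + ((β/2 + (N:ℂ) - (l:ℂ) + 1) * (β/2 - (N:ℂ) + (l:ℂ)) * t) • (1 : A)))

/-- Normalized Branson–Gover element `L̄_N = (β/2-N+1)_{2N}·P_N + (β/2-N)_{2N}·Q_N`. -/
noncomputable def Lbar {A : Type*} [CommRing A] [Algebra ℂ A] (x z : A) (β t : ℂ) (N : ℕ) : A :=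
  (poch (β/2 - (N:ℂ) + 1) (2*N)) • Ppoly x β t N + (poch (β/2 - (N:ℂ)) (2*N)) • Qpoly z β t N

/-- Branson–Gover element `L_N = (β/2+N)·P_N + (β/2-N)·Q_N`. -/
noncomputable def Lel {A : Type*} [CommRing A] [Algebra ℂ A] (x z : A) (β t : ℂ) (N : ℕ) : A :=
  ((β/2 + (N:ℂ)) • Ppoly x β t N) + ((β/2 - (N:ℂ)) • Qpoly z β t N)

lemma prod_Icc_one {A : Type*} [CommMonoid A] (f : ℕ → A) (n : ℕ) :
    ∏ l ∈ Icc 1 n, f l = ∏ i ∈ range n, f (i+1) := by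
  induction n with
  | zero => simp
  | succ m ih => rw [Finset.prod_Icc_succ_top (by omega), ih, Finset.prod_range_succ]

lemma sum_Icc_one {A : Type*} [AddCommMonoid A] (f : ℕ → A) (n : ℕ) :
    ∑ l ∈ Icc 1 n, f l = ∑ i ∈ range n, f (i+1) := by
  induction n with
  | zero => simp
  | succ m ih => rw [Finset.sum_Icc_succ_top (by omega), ih, Finset.sum_range_succ]

section
variable {A : Type*} [CommRing A] [Algebra ℂ A]

lemma x_mul_Q (x z : A) (hxz : x * z = 0) (β t : ℂ) (M : ℕ) :
    x * Qpoly z β t M = 0 := by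
  unfold Qpoly
  rw [Finset.mul_sum]
  apply Finset.sum_eq_zero
  intro j _
  rw [mul_smul_comm, ← mul_assoc, hxz, zero_mul, smul_zero]

lemma z_mul_P (x z : A) (hxz : x * z = 0) (β t : ℂ) (M : ℕ) :
    z * Ppoly x β t M = (∏ l ∈ Icc 1 M, ((β/2 + (l:ℂ) - 1) * (β/2 - (l:ℂ)) * t)) • z := by
  induction M with
  | zero => simp [Ppoly]
  | succ m ih =>
    unfold Ppoly at *
    rw [Finset.prod_Icc_succ_top (by omega : 1 ≤ m + 1), ← mul_assoc, ih,
      Finset.prod_Icc_succ_top (by omega : 1 ≤ m + 1), smul_mul_assoc, mul_add,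
      mul_comm z x, hxz, zero_add, mul_smul_comm, mul_one, smul_smul, mul_comm]

lemma P_rec (x : A) (β t : ℂ) (M : ℕ) :
    Ppoly x β t (M+1)
      = Ppoly x β t M * (x + ((β/2 + (M:ℂ) + 1 - 1) * (β/2 - (M:ℂ) - 1) * t) • (1:A)) := by
  unfold Ppoly
  rw [Finset.prod_Icc_succ_top (by omega : 1 ≤ M + 1)]
  congr 3
  push_cast
  ring

end

section
variable {A : Type*} [CommRing A] [Algebra ℂ A]

lemma Q_rec (z : A) (β t : ℂ) (M : ℕ) :
    Qpoly z β t (M+1)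
      = (poch (β/2 - (M:ℂ) + 1) (2*M) * t^M) • z
        + (z + ((β/2 + (M:ℂ) + 1) * (β/2 - (M:ℂ)) * t) • (1:A)) * Qpoly z β t M := by
  unfold Qpoly
  rw [sum_Icc_one, sum_Icc_one, Finset.sum_range_succ', add_comm]
  congr 1
  · -- the j = 1 term
    simp only [Nat.add_sub_cancel, zero_add, Nat.sub_self, Finset.Icc_self, Nat.cast_one]
    rw [Finset.Icc_eq_empty (by omega), Finset.prod_empty, mul_one]
    rw [show (β/2 - (↑(M+1):ℂ) + 1 + 1) = β/2 - ↑M + 1 from by push_cast; ring]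
  · -- the shifted sum
    rw [Finset.mul_sum]
    apply Finset.sum_congr rfl
    intro i _
    rw [show (M+1) - (i+1+1) = M - (i+1) from Nat.succ_sub_succ _ _]
    rw [show (β/2 - (↑(M+1):ℂ) + ↑(i+1+1) + 1) = β/2 - ↑M + ↑(i+1) + 1 from by push_cast; ring]
    have e3 : (∏ l ∈ Finset.Icc 1 (i+1+1-1),
          (z + ((β/2 + (↑(M+1):ℂ) - ↑l + 1) * (β/2 - ↑(M+1) + ↑l) * t) • (1:A)))
        = (z + ((β/2 + (M:ℂ) + 1) * (β/2 - (M:ℂ)) * t) • (1:A))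
          * ∏ l ∈ Finset.Icc 1 (i+1-1),
              (z + ((β/2 + (M:ℂ) - ↑l + 1) * (β/2 - ↑M + ↑l) * t) • (1:A)) := by
      simp only [Nat.add_sub_cancel]
      rw [prod_Icc_one, prod_Icc_one, Finset.prod_range_succ', mul_comm]
      congr 1
      · congr 3
        push_cast
        ring
      · apply Finset.prod_congr rfl
        intro j _
        congr 3
        push_cast
        ring
    rw [e3, mul_smul_comm]
    congr 1
    ring

end

lemma poch_succ_right (a : ℂ) (k : ℕ) : poch a (k+1) = poch a k * (a + k) :=
  Finset.prod_range_succ _ _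

lemma poch_succ_left (a : ℂ) (k : ℕ) : poch a (k+1) = a * poch (a+1) k := by
  unfold poch
  rw [Finset.prod_range_succ']
  simp only [Nat.cast_zero, add_zero]
  rw [mul_comm]
  congr 1
  apply Finset.prod_congr rfl
  intro i _
  push_cast
  ring

lemma poch_two (a : ℂ) (k : ℕ) : poch a (k+2) = a * (a + (k+1)) * poch (a+1) k := by
  have h : k + 2 = (k+1) + 1 := rfl
  rw [h, poch_succ_left, poch_succ_right]
  push_cast
  ring

lemma poch_eq_prod (b : ℂ) (M : ℕ) :
    poch (b - M) (2*M) = ∏ l ∈ Icc 1 M, ((b + l - 1) * (b - l)) := by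
  induction M with
  | zero => simp [poch]
  | succ m ih =>
    have h2 : 2*(m+1) = (2*m+1)+1 := by ring
    rw [h2, poch_succ_right]
    have h3 : 2*m+1 = (2*m)+1 := rfl
    rw [h3, poch_succ_left]
    have h4 : b - ↑(m+1) + 1 = b - m := by push_cast; ring
    rw [h4, ih, Finset.prod_Icc_succ_top (by omega)]
    push_cast
    ring

theorem Lbar_recurrence' {A : Type*} [CommRing A] [Algebra ℂ A] (x z : A) (hxz : x * z = 0)
    (β t : ℂ) (N : ℕ) (hN : 1 ≤ N) :
    (poch (β/2 - (N:ℂ) + 1) (2*N)) • Ppoly x β t N + (poch (β/2 - (N:ℂ)) (2*N)) • Qpoly z β t N =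
      (((β/2 + (N:ℂ))*(β/2 - (N:ℂ) + 1)) • x
        + ((β/2 + (N:ℂ) - 1)*(β/2 - (N:ℂ))) • z
        + ((β/2 - (N:ℂ))*(β/2 - (N:ℂ) + 1)*(β/2 + (N:ℂ) - 1)*(β/2 + (N:ℂ))*t) • (1 : A))
      * ((poch (β/2 - ((N-1:ℕ):ℂ) + 1) (2*(N-1))) • Ppoly x β t (N-1)
          + (poch (β/2 - ((N-1:ℕ):ℂ)) (2*(N-1))) • Qpoly z β t (N-1)) := by
  obtain ⟨M, rfl⟩ : ∃ M, N = M + 1 := ⟨N - 1, by omega⟩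
  simp only [Nat.add_sub_cancel]
  have hxQ : x * Qpoly z β t M = 0 := x_mul_Q x z hxz β t M
  have hzP : z * Ppoly x β t M
      = algebraMap ℂ A (poch (β/2 - (M:ℂ)) (2*M)) * (algebraMap ℂ A t)^M * z := by
    rw [z_mul_P x z hxz, Finset.prod_mul_distrib, Finset.prod_const, Nat.card_Icc,
      Nat.add_sub_cancel, ← poch_eq_prod, Algebra.smul_def, map_mul, map_pow]
  have hC : poch (β/2 - (↑(M+1):ℂ) + 1) (2*(M+1))
      = ((β/2 + (↑(M+1):ℂ)) * (β/2 - ↑(M+1) + 1)) * poch (β/2 - (M:ℂ) + 1) (2*M) := by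
    rw [show 2*(M+1) = 2*M+2 from by ring, poch_two,
      show (β/2 - (↑(M+1):ℂ) + 1 + 1) = β/2 - ↑M + 1 from by push_cast; ring]
    push_cast
    ring
  have hD : poch (β/2 - (↑(M+1):ℂ)) (2*(M+1))
      = ((β/2 + (↑(M+1):ℂ) - 1) * (β/2 - ↑(M+1))) * poch (β/2 - (M:ℂ)) (2*M) := by
    rw [show 2*(M+1) = 2*M+2 from by ring, poch_two,
      show (β/2 - (↑(M+1):ℂ) + 1) = β/2 - ↑M from by push_cast; ring]
    push_cast
    ring
  rw [hC, hD, P_rec, Q_rec]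
  simp only [Algebra.smul_def, map_mul, map_add, map_sub, map_one, map_pow, map_natCast,
    map_ofNat, mul_one]
  push_cast
  linear_combination (norm := ring1)
    (-(((algebraMap ℂ A (β/2)) + (M:A) + 1) * ((algebraMap ℂ A (β/2)) - ((M:A) + 1) + 1)
        * (algebraMap ℂ A (poch (β/2 - (M:ℂ)) (2*M))))) * hxQ
    + (-(((algebraMap ℂ A (β/2)) + (M:A) + 1 - 1) * ((algebraMap ℂ A (β/2)) - ((M:A) + 1))
        * (algebraMap ℂ A (poch (β/2 - (M:ℂ) + 1) (2*M))))) * hzP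

/-- recurrence for the normalized Branson–Gover elements. -/
theorem Lbar_recurrence {A : Type*} [CommRing A] [Algebra ℂ A] (x z : A) (hxz : x * z = 0)
    (β t : ℂ) (N : ℕ) (hN : 1 ≤ N) :
    Lbar x z β t N =
      (((β/2 + (N:ℂ))*(β/2 - (N:ℂ) + 1)) • x
        + ((β/2 + (N:ℂ) - 1)*(β/2 - (N:ℂ))) • z
        + ((β/2 - (N:ℂ))*(β/2 - (N:ℂ) + 1)*(β/2 + (N:ℂ) - 1)*(β/2 + (N:ℂ))*t) • (1 : A))
      * Lbar x z β t (N-1) := by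
  unfold Lbar
  exact Lbar_recurrence' x z hxz β t N hN
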